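/- arXiv:1210.3845 — 3 statements merged into one kernel-verified Lean document; each statement's English description precedes it below -/
import Mathlib

section
/- Let G be a grid diagram of size n and let x, y be generators of G. Then the set EmptyRect(x,y) of empty rectangles from x to y has at most two elements. -/
/-!
STATEMENT 1. For generators `x, y` of a grid diagram `G` of size `n`, the set
`EmptyRect(x, y)` of empty rectangles from `x` to `y` has at most two elements.

A rectangle from `x` to `y` is determined by an ordered pair of columns
`a ≠ b` with `y = x ∘ (a b)`; it is empty if its interior contains no point
of `x` (equivalently, of `y`).
-/

namespace GridDiagrams

variable {n : ℕ}

/-- `c` lies in the cyclic half-open interval `[a, b)` in `ZMod n`. -/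
def cycIco (a b c : ZMod n) : Prop := (c - a).val < (b - a).val

/-- `c` lies in the open cyclic interval `(a, b)` in `ZMod n`. -/
def cycIoo (a b c : ZMod n) : Prop := 0 < (c - a).val ∧ (c - a).val < (b - a).val

/-- The lattice points in the open interior of the rectangle determined by the
generator `x` and the ordered pair of columns `(a, b)`. -/
def rectInterior (x : Equiv.Perm (ZMod n)) (a b : ZMod n) : Set (ZMod n × ZMod n) :=
  {q | cycIoo a b q.1 ∧ cycIoo (x a) (x b) q.2}

/-- The ordered pair `(a, b)` determines a rectangle from `x` to `y`. -/
def IsRect (x y : Equiv.Perm (ZMod n)) (a b : ZMod n) : Prop :=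
  a ≠ b ∧ y = x * Equiv.swap a b

/-- The ordered pair `(a, b)` determines an *empty* rectangle from `x` to `y`:
no point of `x` lies in its interior. -/
def IsEmptyRect (x y : Equiv.Perm (ZMod n)) (a b : ZMod n) : Prop :=
  IsRect x y a b ∧ ∀ i : ZMod n, (i, x i) ∉ rectInterior x a b

/-- The set of empty rectangles from `x` to `y`, each rectangle recorded by its
determining ordered pair of columns. -/
def EmptyRects (x y : Equiv.Perm (ZMod n)) : Set (ZMod n × ZMod n) :=
  {p | IsEmptyRect x y p.1 p.2}

theorem emptyRect_card_le_two (n : ℕ) [NeZero n]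
    (σO σX : Equiv.Perm (ZMod n))  -- the grid diagram markings
    (x y : Equiv.Perm (ZMod n)) :
    (EmptyRects x y).ncard ≤ 2 := by
  rcases Set.eq_empty_or_nonempty (EmptyRects x y) with h | ⟨⟨a, b⟩, ⟨⟨hne, heq⟩, -⟩⟩
  · simp [h]
  · have hsub : EmptyRects x y ⊆ {(a, b), (b, a)} := by
      rintro ⟨c, d⟩ ⟨⟨hcd, heq'⟩, -⟩
      have hs : Equiv.swap a b = Equiv.swap c d :=
        mul_left_cancel (heq ▸ heq')
      have hd : Equiv.swap a b c = d := by rw [hs, Equiv.swap_apply_left]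
      have hc : c = a ∨ c = b := by
        have : Equiv.swap a b c ≠ c := by rw [hd]; exact (Ne.symm hcd)
        rcases Equiv.swap_apply_ne_self_iff.mp this with ⟨-, h⟩
        exact h
      rcases hc with rfl | rfl
      · left
        rw [Equiv.swap_apply_left] at hd
        simp [hd]
      · right
        rw [Equiv.swap_apply_right] at hd
        simp [hd]
    calc (EmptyRects x y).ncard ≤ ({(a, b), (b, a)} : Set (ZMod n × ZMod n)).ncard :=
          Set.ncard_le_ncard hsub ((Set.finite_singleton _).insert _)
      _ ≤ 2 := by
          apply (Set.ncard_insert_le _ _).trans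
          simp

end GridDiagrams
end

section
/- Let G be a grid diagram of size n and let x, y be generators of G. A function D : (ℤ/n) × (ℤ/n) → ℤ is a positive domain from x to y with total vertex multiplicity N(D) = 1 if and only if D is the indicator function of an empty rectangle from x to y. (This is the combinatorial content of the correspondence between Maslov index 1 pseudo-holomorphic disks on the symmetric product of a grid and empty rectangles.) -/
/-!
STATEMENT 3. A function `D : (ZMod n) × (ZMod n) → ℤ` is a positive domain from
`x` to `y` with total vertex multiplicity `N(D) = 1` if and only if `D` is the
indicator function of an empty rectangle from `x` to `y`.

Here `D (i, j)` is the multiplicity of the square with lower-left lattice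
corner `(i, j)`; for a lattice point `p = (i, j)` one sets
`d_p(D) = D (i, j) + D (i-1, j-1) − D (i-1, j) − D (i, j-1)` and the vertex
multiplicity `n_p(D) = (D (i, j) + D (i-1, j-1) + D (i-1, j) + D (i, j-1))/4`.
`D` is a positive domain from `x` to `y` if all its values are `≥ 0` and
`d_p(D) = [p ∈ x] − [p ∈ y]` for every lattice point `p`; the total vertex
multiplicity is `N(D) = Σ_{p ∈ x} n_p(D) + Σ_{p ∈ y} n_p(D)`.
-/

namespace GridDiagrams

variable {n : ℕ}

/-- The set of squares making up the rectangle determined by the generator `x`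
and the ordered pair of columns `(a, b)`. -/
def rectSquares (x : Equiv.Perm (ZMod n)) (a b : ZMod n) : Set (ZMod n × ZMod n) :=
  {q | cycIco a b q.1 ∧ cycIco (x a) (x b) q.2}

/-- `d_p(D)` for a lattice point `p = (i, j)`. -/
def dCorner (D : ZMod n × ZMod n → ℤ) (p : ZMod n × ZMod n) : ℤ :=
  D p + D (p.1 - 1, p.2 - 1) - D (p.1 - 1, p.2) - D (p.1, p.2 - 1)

/-- The vertex multiplicity `n_p(D)`: the average of the multiplicities of the
four squares around the lattice point `p`. -/
def vertexMult (D : ZMod n × ZMod n → ℤ) (p : ZMod n × ZMod n) : ℚ :=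
  ((D p + D (p.1 - 1, p.2 - 1) + D (p.1 - 1, p.2) + D (p.1, p.2 - 1) : ℤ) : ℚ) / 4

/-- `D` is a positive domain from `x` to `y`: it has nonnegative multiplicities
and satisfies `d_p(D) = [p ∈ x] − [p ∈ y]` at every lattice point `p`. -/
def IsPositiveDomain (x y : Equiv.Perm (ZMod n)) (D : ZMod n × ZMod n → ℤ) : Prop :=
  (∀ q : ZMod n × ZMod n, 0 ≤ D q) ∧
  ∀ p : ZMod n × ZMod n,
    dCorner D p = (if p.2 = x p.1 then 1 else 0) - (if p.2 = y p.1 then 1 else 0)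

/-- The total vertex multiplicity `N(D) = Σ_{p ∈ x} n_p(D) + Σ_{p ∈ y} n_p(D)`. -/
def totalVertexMult [NeZero n] (x y : Equiv.Perm (ZMod n))
    (D : ZMod n × ZMod n → ℤ) : ℚ :=
  (∑ i : ZMod n, vertexMult D (i, x i)) + ∑ i : ZMod n, vertexMult D (i, y i)

/-!
Write `cornerSum D p = 4 n_p(D)`. For `D ≥ 0`, `cornerSum D p ≥ |d_p(D)|`, and even
`cornerSum D p ≥ 1 + 2 D p` at a point `p` of `y` not in `x`; so every column in which `x` and `y`
differ contributes at least `2` to `4 N(D)`. If `x = y`, then `d_p(D) ≡ 0`, hence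
`D (i, j) = c i + e j` and `4 N(D) = 8 (∑ c + ∑ e) ≠ 4`. Thus `N(D) = 1` forces `y = x ∘ (a b)`
with no slack: `D` vanishes around the other points of `x` and on the squares `(a, x b)` and
`(b, x a)`. The difference of `D` and the rectangle `[a, b) × [x a, x b)` again has `d_p ≡ 0`, and
these zeros make `D` a combination of this rectangle and its complement with nonnegative
coefficients summing to `1`. Emptiness is the vanishing of `D` at the points of `x`. Conversely,
an empty rectangle has corner sum `1` at its four corners and `0` at every other point of `x`
and `y`.
-/

theorem eq_mul_swap_of_apply_eq {α : Type*} [DecidableEq α] {x y : Equiv.Perm α} {a b : α}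
    (ha : y a = x b) (hrest : ∀ i, i ≠ a → i ≠ b → y i = x i) : y = x * Equiv.swap a b := by
  have hb : y b = x a := by
    set k := y.symm (x a)
    have hk : y k = x a := y.apply_symm_apply _
    by_cases hka : k = a
    · have hba : b = a := x.injective (by rw [← ha, ← hk, hka])
      rw [hba, ← hk, hka]
    by_cases hkb : k = b
    · rwa [← hkb]
    · exact absurd (x.injective ((hrest k hka hkb).symm.trans hk)) hka
  ext i
  by_cases hia : i = a
  · simp [hia, ha]
  by_cases hib : i = b
  · simp [hib, hb]
  · simp [Equiv.swap_apply_of_ne_of_ne hia hib, hrest i hia hib]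

section Arcs

theorem zmod_induction_from [NeZero n] {P : ZMod n → Prop} (z₀ : ZMod n) (h₀ : P z₀)
    (step : ∀ z, P z → P (z + 1)) (z : ZMod n) : P z := by
  have hk : ∀ k : ℕ, P (z₀ + k) := by
    intro k
    induction k with
    | zero => simpa using h₀
    | succ k ih => simpa [add_assoc] using step _ ih
  obtain ⟨k, hk'⟩ := ZMod.natCast_zmod_surjective (z - z₀)
  simpa [hk'] using hk k

theorem zmod_val_sub_one [NeZero n] (z : ZMod n) :
    (z - 1).val = if z = 0 then n - 1 else z.val - 1 := by
  obtain ⟨m, rfl⟩ := Nat.exists_eq_succ_of_ne_zero (NeZero.ne n)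
  exact Fin.coe_sub_one z

instance (a b c : ZMod n) : Decidable (cycIco a b c) := Nat.decLt _ _

def arcInd (a b c : ZMod n) : ℤ := if cycIco a b c then 1 else 0

variable {a b : ZMod n}

theorem arcInd_nonneg (a b c : ZMod n) : 0 ≤ arcInd a b c := by
  unfold arcInd; split_ifs <;> omega

theorem arcInd_left (hab : a ≠ b) : arcInd a b a = 1 := by
  simp [arcInd, cycIco, Nat.pos_iff_ne_zero, sub_eq_zero, hab.symm]

theorem arcInd_right (a b : ZMod n) : arcInd a b b = 0 := by
  simp [arcInd, cycIco]

theorem arcInd_sub_arcInd_sub_one [NeZero n] (a b j : ZMod n) :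
    arcInd a b j - arcInd a b (j - 1) = (if j = a then 1 else 0) - (if j = b then 1 else 0) := by
  have hshift : j - 1 - a = (j - a) - 1 := by ring
  have hja : j = a ↔ (j - a).val = 0 := by rw [ZMod.val_eq_zero, sub_eq_zero]
  have hjb : j = b ↔ (j - a).val = (b - a).val := by
    rw [(ZMod.val_injective n).eq_iff, sub_left_inj]
  have hlt₁ := ZMod.val_lt (j - a)
  have hlt₂ := ZMod.val_lt (b - a)
  have hval := zmod_val_sub_one (j - a)
  simp only [← ZMod.val_eq_zero] at hval
  simp only [arcInd, cycIco, hshift, hval, hja, hjb]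
  by_cases h0 : (j - a).val = 0 <;> simp only [h0, if_true, if_false] <;> split_ifs <;> omega

theorem arcInd_sub_one_of_ne [NeZero n] {j : ZMod n} (hja : j ≠ a) (hjb : j ≠ b) :
    arcInd a b (j - 1) = arcInd a b j := by
  have := arcInd_sub_arcInd_sub_one a b j
  simp only [hja, hjb, if_false] at this
  omega

theorem arcInd_add_arcInd_sub_one_left [NeZero n] (hab : a ≠ b) :
    arcInd a b a + arcInd a b (a - 1) = 1 := by
  have := arcInd_sub_arcInd_sub_one a b a
  simp [hab, arcInd_left hab] at this ⊢
  omega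

theorem arcInd_add_arcInd_sub_one_right [NeZero n] (hab : a ≠ b) :
    arcInd a b b + arcInd a b (b - 1) = 1 := by
  have := arcInd_sub_arcInd_sub_one a b b
  simp [hab.symm, arcInd_right] at this ⊢
  omega

end Arcs

section Rectangles

def cornerSum (D : ZMod n × ZMod n → ℤ) (p : ZMod n × ZMod n) : ℤ :=
  D p + D (p.1 - 1, p.2 - 1) + D (p.1 - 1, p.2) + D (p.1, p.2 - 1)

noncomputable def rectInd (x : Equiv.Perm (ZMod n)) (a b : ZMod n) : ZMod n × ZMod n → ℤ :=
  Set.indicator (rectSquares x a b) fun _ => 1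

theorem rectInd_eq_mul (x : Equiv.Perm (ZMod n)) (a b : ZMod n) :
    rectInd x a b = fun q => arcInd a b q.1 * arcInd (x a) (x b) q.2 := by
  ext q
  by_cases h₁ : cycIco a b q.1 <;> by_cases h₂ : cycIco (x a) (x b) q.2 <;>
    simp [rectInd, rectSquares, arcInd, Set.indicator, h₁, h₂]

theorem rectInd_nonneg (x : Equiv.Perm (ZMod n)) (a b : ZMod n) (q : ZMod n × ZMod n) :
    0 ≤ rectInd x a b q := by
  rw [rectInd_eq_mul]
  exact mul_nonneg (arcInd_nonneg _ _ _) (arcInd_nonneg _ _ _)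

theorem dCorner_mul (f g : ZMod n → ℤ) (p : ZMod n × ZMod n) :
    dCorner (fun q => f q.1 * g q.2) p = (f p.1 - f (p.1 - 1)) * (g p.2 - g (p.2 - 1)) := by
  simp only [dCorner]; ring

theorem cornerSum_mul (f g : ZMod n → ℤ) (p : ZMod n × ZMod n) :
    cornerSum (fun q => f q.1 * g q.2) p = (f p.1 + f (p.1 - 1)) * (g p.2 + g (p.2 - 1)) := by
  simp only [cornerSum]; ring

theorem dCorner_rectInd [NeZero n] (x : Equiv.Perm (ZMod n)) (a b : ZMod n)
    (p : ZMod n × ZMod n) :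
    dCorner (rectInd x a b) p =
      (if p.2 = x p.1 then 1 else 0) - (if p.2 = (x * Equiv.swap a b) p.1 then 1 else 0) := by
  obtain ⟨i, j⟩ := p
  rw [rectInd_eq_mul, dCorner_mul, arcInd_sub_arcInd_sub_one, arcInd_sub_arcInd_sub_one]
  simp only [Equiv.Perm.mul_apply]
  by_cases hia : i = a
  · subst hia
    by_cases hib : i = b
    · subst hib; simp
    · simp [hib, eq_comm (a := j)]
  · by_cases hib : i = b
    · subst hib; simp [hia, eq_comm (a := j)]
    · simp [hia, hib, Equiv.swap_apply_of_ne_of_ne]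

theorem mem_rectInterior_iff (x : Equiv.Perm (ZMod n)) (a b i : ZMod n) :
    (i, x i) ∈ rectInterior x a b ↔ i ≠ a ∧ (i, x i) ∈ rectSquares x a b := by
  simp only [rectInterior, rectSquares, cycIoo, cycIco, Set.mem_ofPred_eq, Nat.pos_iff_ne_zero,
    ne_eq, ZMod.val_eq_zero, sub_eq_zero, x.injective.eq_iff]
  tauto

end Rectangles

theorem totalVertexMult_eq_one_iff [NeZero n] (x y : Equiv.Perm (ZMod n))
    (D : ZMod n × ZMod n → ℤ) :
    totalVertexMult x y D = 1 ↔ ∑ i, (cornerSum D (i, x i) + cornerSum D (i, y i)) = 4 := by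
  have h : totalVertexMult x y D =
      ((∑ i, (cornerSum D (i, x i) + cornerSum D (i, y i)) : ℤ) : ℚ) / 4 := by
    simp [totalVertexMult, vertexMult, cornerSum, Finset.sum_add_distrib, Finset.sum_div, add_div]
  rw [h, div_eq_one_iff_eq (by norm_num)]
  exact_mod_cast Iff.rfl

section Corners

variable [NeZero n] {D : ZMod n × ZMod n → ℤ}

theorem exists_eq_add_of_dCorner_eq_zero (h : ∀ p, dCorner D p = 0) :
    ∃ c e : ZMod n → ℤ, ∀ i j, D (i, j) = c i + e j := by
  have hcol : ∀ i j, D (i, j) - D (i - 1, j) = D (i, 0) - D (i - 1, 0) := by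
    intro i
    refine zmod_induction_from 0 rfl fun j hj => ?_
    have := h (i, j + 1)
    simp only [dCorner, add_sub_cancel_right] at this
    linarith
  refine ⟨fun i => D (i, 0) - D (0, 0), fun j => D (0, j), fun i j => ?_⟩
  refine zmod_induction_from (P := fun i => D (i, j) = D (i, 0) - D (0, 0) + D (0, j)) 0
    (by simp) (fun i hi => ?_) i
  have := hcol (i + 1) j
  simp only [add_sub_cancel_right] at this hi ⊢
  linarith

theorem sum_cornerSum_of_eq_add {c e : ZMod n → ℤ} (hD : ∀ i j, D (i, j) = c i + e j)
    (z : Equiv.Perm (ZMod n)) :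
    ∑ i, cornerSum D (i, z i) = 4 * (∑ i, c i + ∑ j, e j) := by
  have hshift : ∀ f : ZMod n → ℤ, ∑ i, f (i - 1) = ∑ i, f i :=
    fun f => Fintype.sum_equiv (Equiv.subRight 1) _ _ fun _ => rfl
  have hz : ∑ i, e (z i) = ∑ j, e j := Equiv.sum_comp z e
  have hz' : ∑ i, e (z i - 1) = ∑ j, e j := (Equiv.sum_comp z (fun j => e (j - 1))).trans (hshift e)
  simp only [cornerSum, hD, Finset.sum_add_distrib, hshift c, hz, hz']
  ring

theorem sum_cornerSum_self_ne_four (h : ∀ p, dCorner D p = 0) (z : Equiv.Perm (ZMod n)) :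
    ∑ i, (cornerSum D (i, z i) + cornerSum D (i, z i)) ≠ 4 := by
  obtain ⟨c, e, hce⟩ := exists_eq_add_of_dCorner_eq_zero h
  rw [Finset.sum_add_distrib, sum_cornerSum_of_eq_add hce]
  omega

end Corners

section Bounds

variable {D : ZMod n × ZMod n → ℤ} (hD : ∀ q, 0 ≤ D q) {p : ZMod n × ZMod n}
include hD

theorem abs_dCorner_le_cornerSum : |dCorner D p| ≤ cornerSum D p := by
  have := hD p; have := hD (p.1 - 1, p.2 - 1); have := hD (p.1 - 1, p.2); have := hD (p.1, p.2 - 1)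
  rw [abs_le]; constructor <;> simp only [dCorner, cornerSum] <;> linarith

theorem one_add_two_mul_le_cornerSum (h : dCorner D p = -1) : 1 + 2 * D p ≤ cornerSum D p := by
  have := hD (p.1 - 1, p.2 - 1)
  simp only [dCorner, cornerSum] at h ⊢
  linarith

theorem eq_zero_of_cornerSum_eq_zero (h : cornerSum D p = 0) :
    D p = 0 ∧ D (p.1 - 1, p.2) = 0 ∧ D (p.1, p.2 - 1) = 0 := by
  have := hD p; have := hD (p.1 - 1, p.2 - 1); have := hD (p.1 - 1, p.2); have := hD (p.1, p.2 - 1)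
  simp only [cornerSum] at h
  omega

end Bounds

theorem exists_swap_of_sum_cornerSum_eq_four [NeZero n] {x y : Equiv.Perm (ZMod n)}
    {D : ZMod n × ZMod n → ℤ} (hD : ∀ q, 0 ≤ D q)
    (hdc : ∀ p : ZMod n × ZMod n,
      dCorner D p = (if p.2 = x p.1 then 1 else 0) - (if p.2 = y p.1 then 1 else 0))
    (hN : ∑ i, (cornerSum D (i, x i) + cornerSum D (i, y i)) = 4) :
    ∃ a b, a ≠ b ∧ y = x * Equiv.swap a b ∧
      (∀ i, i ≠ a → i ≠ b → D (i, x i) = 0 ∧ D (i - 1, x i) = 0 ∧ D (i, x i - 1) = 0) ∧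
      D (a, x b) = 0 ∧ D (b, x a) = 0 := by
  obtain ⟨a, hxa⟩ : ∃ a, x a ≠ y a := by
    by_contra! hxy
    obtain rfl : x = y := Equiv.ext hxy
    exact sum_cornerSum_self_ne_four (fun p => by simp [hdc]) x hN
  set b := x.symm (y a)
  have hxb : x b = y a := x.apply_symm_apply _
  have hab : a ≠ b := fun h => hxa (h ▸ hxb)
  have hyb : x b ≠ y b := fun h => hab (y.injective (h.symm.trans hxb)).symm
  have hpos : ∀ p, 0 ≤ cornerSum D p := fun p => (abs_nonneg _).trans (abs_dCorner_le_cornerSum hD)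
  have hx_lb : ∀ i, x i ≠ y i → 1 ≤ cornerSum D (i, x i) := fun i h => by
    simpa [hdc, h] using abs_dCorner_le_cornerSum hD (p := (i, x i))
  have hy_lb : ∀ i, x i ≠ y i → 1 + 2 * D (i, y i) ≤ cornerSum D (i, y i) := fun i h =>
    one_add_two_mul_le_cornerSum hD (by simp [hdc, Ne.symm h])
  set f := fun i => cornerSum D (i, x i) + cornerSum D (i, y i)
  have hf : ∀ i, 0 ≤ f i := fun i => add_nonneg (hpos _) (hpos _)
  have hfa : 2 + 2 * D (a, y a) ≤ f a := by linarith [hx_lb a hxa, hy_lb a hxa]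
  have hfb : 2 + 2 * D (b, y b) ≤ f b := by linarith [hx_lb b hyb, hy_lb b hyb]
  have hfab : f a + f b ≤ 4 := by
    simpa [Finset.sum_pair hab, hN] using Finset.sum_le_univ_sum_of_nonneg (s := {a, b}) hf
  have hrest : ∀ i, i ≠ a → i ≠ b → f i = 0 := fun i hia hib => by
    have := Finset.sum_le_univ_sum_of_nonneg (s := {i, a, b}) hf
    rw [Finset.sum_insert (by simp [hia, hib]), Finset.sum_pair hab, hN] at this
    linarith [hf i, hD (a, y a), hD (b, y b)]
  have hy : y = x * Equiv.swap a b := eq_mul_swap_of_apply_eq hxb.symm fun i hia hib => by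
    by_contra h
    linarith [hrest i hia hib, hx_lb i (Ne.symm h), hpos (i, y i)]
  have hyb' : y b = x a := by simp [hy]
  refine ⟨a, b, hab, hy, fun i hia hib => eq_zero_of_cornerSum_eq_zero hD ?_, ?_, ?_⟩
  · linarith [hrest i hia hib, hpos (i, x i), hpos (i, y i)]
  · rw [hxb]
    linarith [hD (a, y a), hD (b, y b)]
  · rw [← hyb']
    linarith [hD (a, y a), hD (b, y b)]

section Forward

variable [NeZero n] {a b : ZMod n}

theorem eq_add_mul_arcInd {c : ZMod n → ℤ} (hab : a ≠ b)
    (hc : ∀ i, i ≠ a → i ≠ b → c (i - 1) = c i) (i : ZMod n) :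
    c i = c b + (c a - c b) * arcInd a b i := by
  refine zmod_induction_from (P := fun i => c i = c b + (c a - c b) * arcInd a b i) a
    (by simp [arcInd_left hab]) (fun i hi => ?_) i
  by_cases hia : i + 1 = a
  · simp [hia, arcInd_left hab]
  by_cases hib : i + 1 = b
  · simp [hib, arcInd_right]
  · have hci := hc (i + 1) hia hib
    have hAi := arcInd_sub_one_of_ne hia hib
    simp only [add_sub_cancel_right] at hci hAi
    rw [← hci, ← hAi]
    exact hi

/-- The right-hand side is `1 - κ` times the rectangle `[a, b) × [x a, x b)` plus `κ` times the
complementary rectangle `[b, a) × [x b, x a)`, where `κ = D (b, x b)`. -/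
theorem eq_rectInd_add {x : Equiv.Perm (ZMod n)} {D : ZMod n × ZMod n → ℤ} (hab : a ≠ b)
    (hdc : ∀ p, dCorner D p = dCorner (rectInd x a b) p)
    (hzero : ∀ i, i ≠ a → i ≠ b → D (i, x i) = 0 ∧ D (i - 1, x i) = 0 ∧ D (i, x i - 1) = 0)
    (hab0 : D (a, x b) = 0) (hba0 : D (b, x a) = 0) (q : ZMod n × ZMod n) :
    D q = rectInd x a b q + D (b, x b) * (1 - arcInd a b q.1 - arcInd (x a) (x b) q.2) := by
  have hxab : x a ≠ x b := x.injective.ne hab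
  obtain ⟨c, e, hce⟩ := exists_eq_add_of_dCorner_eq_zero (D := D - rectInd x a b) fun p => by
    have := hdc p
    simp only [dCorner, Pi.sub_apply] at this ⊢
    linarith
  simp only [Pi.sub_apply, rectInd_eq_mul] at hce
  have hc : ∀ i, i ≠ a → i ≠ b → c (i - 1) = c i := fun i hia hib => by
    have h₁ := hce i (x i)
    have h₂ := hce (i - 1) (x i)
    rw [(hzero i hia hib).1] at h₁
    rw [arcInd_sub_one_of_ne hia hib, (hzero i hia hib).2.1] at h₂
    linarith
  have he : ∀ j, j ≠ x a → j ≠ x b → e (j - 1) = e j := fun j hja hjb => by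
    obtain ⟨i, rfl⟩ := x.surjective j
    have hi := hzero i (fun h => hja (h ▸ rfl)) (fun h => hjb (h ▸ rfl))
    have h₁ := hce i (x i)
    have h₂ := hce i (x i - 1)
    rw [hi.1] at h₁
    rw [arcInd_sub_one_of_ne hja hjb, hi.2.2] at h₂
    linarith
  obtain ⟨i, j⟩ := q
  have hij := hce i j
  have hab' := hce a (x b)
  have hba' := hce b (x a)
  have hbb := hce b (x b)
  rw [eq_add_mul_arcInd hab hc i, eq_add_mul_arcInd hxab he j] at hij
  simp only [arcInd_left hab, arcInd_left hxab, arcInd_right, hab0, hba0] at hab' hba' hbb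
  rw [rectInd_eq_mul]
  linear_combination hij + (arcInd a b i + arcInd (x a) (x b) j - 1) * hbb - arcInd a b i * hab'
    - arcInd (x a) (x b) j * hba'

theorem eq_rectInd_or_eq_rectInd_swap {x : Equiv.Perm (ZMod n)}
    {D : ZMod n × ZMod n → ℤ} (hD : ∀ q, 0 ≤ D q) (hab : a ≠ b)
    (hdc : ∀ p, dCorner D p = dCorner (rectInd x a b) p)
    (hzero : ∀ i, i ≠ a → i ≠ b → D (i, x i) = 0 ∧ D (i - 1, x i) = 0 ∧ D (i, x i - 1) = 0)
    (hab0 : D (a, x b) = 0) (hba0 : D (b, x a) = 0) :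
    D = rectInd x a b ∨ D = rectInd x b a := by
  have hxab : x a ≠ x b := x.injective.ne hab
  have hDab := eq_rectInd_add hab hdc hzero hab0 hba0
  have haa := hDab (a, x a)
  simp only [rectInd_eq_mul, arcInd_left hab, arcInd_left hxab] at haa
  obtain hbb | hbb : D (b, x b) = 0 ∨ D (b, x b) = 1 := by
    have := hD (a, x a); have := hD (b, x b); omega
  · left
    funext q
    simpa [hbb] using hDab q
  · right
    have hDba := eq_rectInd_add hab.symm
      (fun p => by rw [hdc, dCorner_rectInd, dCorner_rectInd, Equiv.swap_comm])
      (fun i hib hia => hzero i hia hib) hba0 hab0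
    have haa0 : D (a, x a) = 0 := by rw [haa, hbb]; ring
    funext q
    simpa [haa0] using hDba q

end Forward

theorem forall_notMem_rectInterior_iff (x : Equiv.Perm (ZMod n)) (a b : ZMod n) :
    (∀ i, (i, x i) ∉ rectInterior x a b) ↔
      ∀ i, i ≠ a → i ≠ b → rectInd x a b (i, x i) = 0 := by
  have hb : ∀ i, (i, x i) ∈ rectSquares x a b → i ≠ b := by
    rintro i ⟨hi, -⟩ rfl
    exact lt_irrefl _ hi
  simp only [mem_rectInterior_iff, rectInd, Set.indicator_apply_eq_zero, one_ne_zero, imp_false,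
    not_and]
  exact ⟨fun h i hia _ => h i hia, fun h i hia hi => h i hia (hb i hi) hi⟩

theorem sum_cornerSum_rectInd [NeZero n] {x : Equiv.Perm (ZMod n)} {a b : ZMod n} (hab : a ≠ b)
    (hempty : ∀ i, i ≠ a → i ≠ b → rectInd x a b (i, x i) = 0) :
    ∑ i, (cornerSum (rectInd x a b) (i, x i)
      + cornerSum (rectInd x a b) (i, (x * Equiv.swap a b) i)) = 4 := by
  have hxab : x a ≠ x b := x.injective.ne hab
  rw [Fintype.sum_eq_add a b hab]
  · simp [rectInd_eq_mul, cornerSum_mul, arcInd_add_arcInd_sub_one_left hab,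
      arcInd_add_arcInd_sub_one_right hab, arcInd_add_arcInd_sub_one_left hxab,
      arcInd_add_arcInd_sub_one_right hxab]
  · rintro i ⟨hia, hib⟩
    have hi := hempty i hia hib
    rw [rectInd_eq_mul] at hi ⊢
    simp only [cornerSum_mul, Equiv.Perm.mul_apply, Equiv.swap_apply_of_ne_of_ne hia hib,
      arcInd_sub_one_of_ne hia hib, arcInd_sub_one_of_ne (x.injective.ne hia) (x.injective.ne hib)]
    linear_combination 8 * hi

theorem positiveDomain_N_eq_one_iff_emptyRect_general (n : ℕ) [NeZero n]
    (x y : Equiv.Perm (ZMod n)) (D : ZMod n × ZMod n → ℤ) :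
    (IsPositiveDomain x y D ∧ totalVertexMult x y D = 1) ↔
    (∃ a b : ZMod n, IsEmptyRect x y a b ∧
      D = Set.indicator (rectSquares x a b) fun _ => (1 : ℤ)) := by
  constructor
  · rintro ⟨⟨hD, hdc⟩, hN⟩
    rw [totalVertexMult_eq_one_iff] at hN
    obtain ⟨a, b, hab, rfl, hzero, hab0, hba0⟩ := exists_swap_of_sum_cornerSum_eq_four hD hdc hN
    have hempty : ∀ i, i ≠ a → i ≠ b → D (i, x i) = 0 := fun i hia hib => (hzero i hia hib).1
    rcases eq_rectInd_or_eq_rectInd_swap hD hab (fun p => by rw [hdc, dCorner_rectInd]) hzero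
      hab0 hba0 with rfl | rfl
    · exact ⟨a, b, ⟨⟨hab, rfl⟩, (forall_notMem_rectInterior_iff x a b).2 hempty⟩, rfl⟩
    · exact ⟨b, a, ⟨⟨hab.symm, by rw [Equiv.swap_comm]⟩,
        (forall_notMem_rectInterior_iff x b a).2 fun i hib hia => hempty i hia hib⟩, rfl⟩
  · rintro ⟨a, b, ⟨⟨hab, rfl⟩, hempty⟩, rfl⟩
    rw [forall_notMem_rectInterior_iff] at hempty
    exact ⟨⟨rectInd_nonneg x a b, dCorner_rectInd x a b⟩,
      (totalVertexMult_eq_one_iff _ _ _).2 (sum_cornerSum_rectInd hab hempty)⟩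

theorem positiveDomain_N_eq_one_iff_emptyRect (n : ℕ) [NeZero n]
    (σO σX : Equiv.Perm (ZMod n))  -- the grid diagram markings
    (x y : Equiv.Perm (ZMod n)) (D : ZMod n × ZMod n → ℤ) :
    (IsPositiveDomain x y D ∧ totalVertexMult x y D = 1) ↔
    (∃ a b : ZMod n, IsEmptyRect x y a b ∧
      D = Set.indicator (rectSquares x a b) fun _ => (1 : ℤ)) :=
  positiveDomain_N_eq_one_iff_emptyRect_general n x y D

end GridDiagrams
end

section
/- Let G be a grid diagram of size n, let x, y be generators, and let r be a rectangle from x to y whose interior contains exactly k points of x (these are the same as the points of y in its interior). Then the indicator function D_r of r is a positive domain from x to y, and its total vertex multiplicity is N(D_r) = 1 + 2k. In particular, N(D_r) = 1 if and only if r is empty. -/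
/-!
STATEMENT 4. Let `r` be a rectangle from `x` to `y` (determined by the ordered
pair of columns `(a, b)`) whose interior contains exactly `k` points of `x`.
Then the indicator function `D_r` of `r` is a positive domain from `x` to `y`,
its total vertex multiplicity is `N(D_r) = 1 + 2k`, and in particular
`N(D_r) = 1` if and only if `r` is empty.
-/

namespace GridDiagrams

variable {n : ℕ}

/-! ### Auxiliary lemmas -/

instance cycIcoDec (a b c : ZMod n) : Decidable (cycIco a b c) :=
  inferInstanceAs (Decidable (_ < _))
instance cycIooDec (a b c : ZMod n) : Decidable (cycIoo a b c) :=
  inferInstanceAs (Decidable (_ ∧ _))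

theorem aux_val_sub_one [NeZero n] {c : ZMod n} (hc : c ≠ 0) : (c - 1).val = c.val - 1 := by
  have h1 : 1 ≤ c.val := Nat.one_le_iff_ne_zero.mpr (by simpa [ZMod.val_eq_zero] using hc)
  have h2 : c - 1 = ((c.val - 1 : ℕ) : ZMod n) := by
    have := ZMod.natCast_rightInverse (n := n) c
    push_cast [Nat.cast_sub h1]
    rw [this]
  have h3 := ZMod.val_lt c
  rw [h2, ZMod.val_cast_of_lt (by omega)]

theorem aux_val_neg_one [NeZero n] : (-1 : ZMod n).val = n - 1 := by
  obtain ⟨m, rfl⟩ := Nat.exists_eq_succ_of_ne_zero (NeZero.ne n)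
  simp [ZMod.val_neg_one m]

section Intervals
variable [NeZero n] {a b : ZMod n}

theorem cycIco_self (hab : a ≠ b) : cycIco a b a := by
  simp only [cycIco, sub_self, ZMod.val_zero]
  exact ZMod.val_pos.mpr (sub_ne_zero.mpr hab.symm)

theorem not_cycIco_right : ¬ cycIco a b b := by simp [cycIco]

theorem not_cycIco_pred_self : ¬ cycIco a b (a - 1) := by
  have h1 : a - 1 - a = -1 := by ring
  have h2 := ZMod.val_lt (b - a)
  simp only [cycIco, h1, aux_val_neg_one]
  omega

theorem cycIco_pred_right (hab : a ≠ b) : cycIco a b (b - 1) := by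
  have h1 : b - 1 - a = (b - a) - 1 := by ring
  have h2 : b - a ≠ 0 := sub_ne_zero.mpr hab.symm
  have h3 : 0 < (b - a).val := ZMod.val_pos.mpr h2
  simp only [cycIco, h1, aux_val_sub_one h2]
  omega

theorem cycIco_pred_iff {i : ZMod n} (h1 : i ≠ a) (h2 : i ≠ b) :
    cycIco a b (i - 1) ↔ cycIco a b i := by
  have e1 : i - 1 - a = (i - a) - 1 := by ring
  have e2 : i - a ≠ 0 := sub_ne_zero.mpr h1
  have e3 : 0 < (i - a).val := ZMod.val_pos.mpr e2
  have e4 : (i - a).val ≠ (b - a).val := fun h => h2 (by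
    have := ZMod.val_injective n h
    exact sub_left_inj.mp this)
  simp only [cycIco, e1, aux_val_sub_one e2]
  omega

theorem cycIoo_iff {i : ZMod n} : cycIoo a b i ↔ i ≠ a ∧ cycIco a b i := by
  simp only [cycIoo, cycIco, ZMod.val_pos, sub_ne_zero, and_congr_left_iff]

theorem f_step (hab : a ≠ b) (i : ZMod n) :
    (if cycIco a b i then (1:ℤ) else 0) - (if cycIco a b (i - 1) then 1 else 0)
      = (if i = a then (1:ℤ) else 0) - (if i = b then 1 else 0) := by
  by_cases h1 : i = a
  · subst h1
    rw [if_pos (cycIco_self hab), if_neg (not_cycIco_pred_self (b := b)),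
      if_pos rfl, if_neg hab]
  by_cases h2 : i = b
  · subst h2
    rw [if_neg (not_cycIco_right (a := a)), if_pos (cycIco_pred_right hab),
      if_neg h1, if_pos rfl]
  · simp only [cycIco_pred_iff h1 h2, if_neg h1, if_neg h2, sub_self]

end Intervals

theorem indicator_eq (x : Equiv.Perm (ZMod n)) (a b : ZMod n) (q : ZMod n × ZMod n) :
    Set.indicator (rectSquares x a b) (fun _ => (1 : ℤ)) q =
      (if cycIco a b q.1 then (1:ℤ) else 0) * (if cycIco (x a) (x b) q.2 then 1 else 0) := by
  classical
  simp only [Set.indicator_apply, rectSquares, Set.mem_setOf_eq]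
  split_ifs <;> simp_all

theorem dCorner_rect [NeZero n] {x y : Equiv.Perm (ZMod n)} {a b : ZMod n}
    (hab : a ≠ b) (hy : y = x * Equiv.swap a b) (p : ZMod n × ZMod n) :
    dCorner (Set.indicator (rectSquares x a b) fun _ => (1:ℤ)) p
      = (if p.2 = x p.1 then 1 else 0) - (if p.2 = y p.1 then 1 else 0) := by
  have hxab : x a ≠ x b := fun h => hab (x.injective h)
  obtain ⟨i, j⟩ := p
  have key : dCorner (Set.indicator (rectSquares x a b) fun _ => (1:ℤ)) (i, j)
      = ((if cycIco a b i then (1:ℤ) else 0) - (if cycIco a b (i - 1) then 1 else 0))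
        * ((if cycIco (x a) (x b) j then (1:ℤ) else 0)
            - (if cycIco (x a) (x b) (j - 1) then 1 else 0)) := by
    simp only [dCorner, indicator_eq]
    ring
  rw [key, f_step hab i, f_step hxab j]
  by_cases h1 : i = a
  · have hib : i ≠ b := by rw [h1]; exact hab
    have hxia : x i = x a := by rw [h1]
    have hya : y i = x b := by rw [hy, h1, Equiv.Perm.mul_apply, Equiv.swap_apply_left]
    rw [if_pos h1, if_neg hib, hxia, hya]
    ring
  by_cases h2 : i = b
  · have hyb : y i = x a := by rw [hy, h2, Equiv.Perm.mul_apply, Equiv.swap_apply_right]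
    have hxib : x i = x b := by rw [h2]
    rw [if_neg h1, if_pos h2, hxib, hyb]
    ring
  · have hyi : y i = x i := by
      rw [hy, Equiv.Perm.mul_apply, Equiv.swap_apply_of_ne_of_ne h1 h2]
    rw [if_neg h1, if_neg h2, hyi]
    ring

theorem vm_eq [NeZero n] (x : Equiv.Perm (ZMod n)) (a b : ZMod n) (i j : ZMod n) :
    vertexMult (Set.indicator (rectSquares x a b) fun _ => (1:ℤ)) (i, j)
      = ((if cycIco a b i then (1:ℚ) else 0) + (if cycIco a b (i - 1) then 1 else 0))
        * ((if cycIco (x a) (x b) j then 1 else 0)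
            + (if cycIco (x a) (x b) (j - 1) then 1 else 0)) / 4 := by
  simp only [vertexMult, indicator_eq]
  push_cast [apply_ite (fun z : ℤ => (z : ℚ))]
  ring

theorem rect_indicator_is_positive_domain (n : ℕ) [NeZero n]
    (σO σX : Equiv.Perm (ZMod n))  -- the grid diagram markings
    (x y : Equiv.Perm (ZMod n)) (a b : ZMod n)
    (hr : IsRect x y a b) (k : ℕ)
    -- the interior of the rectangle contains exactly `k` points of `x`:
    (hk : {i : ZMod n | (i, x i) ∈ rectInterior x a b}.ncard = k) :
    IsPositiveDomain x y (Set.indicator (rectSquares x a b) fun _ => (1 : ℤ)) ∧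
    totalVertexMult x y (Set.indicator (rectSquares x a b) fun _ => (1 : ℤ))
      = 1 + 2 * (k : ℚ) ∧
    (totalVertexMult x y (Set.indicator (rectSquares x a b) fun _ => (1 : ℤ)) = 1
      ↔ IsEmptyRect x y a b) := by
  classical
  obtain ⟨hab, hy⟩ := hr
  have hxab : x a ≠ x b := fun h => hab (x.injective h)
  refine ⟨⟨fun q => Set.indicator_nonneg (fun _ _ => zero_le_one) q,
    dCorner_rect hab hy⟩, ?_⟩
  have hpt : ∀ i : ZMod n,
      vertexMult (Set.indicator (rectSquares x a b) fun _ => (1:ℤ)) (i, x i)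
        + vertexMult (Set.indicator (rectSquares x a b) fun _ => (1:ℤ)) (i, y i)
      = (if (i, x i) ∈ rectInterior x a b then (2:ℚ) else 0)
        + ((if i = a then (2:ℚ)⁻¹ else 0) + (if i = b then (2:ℚ)⁻¹ else 0)) := by
    intro i
    rw [vm_eq, vm_eq]
    by_cases h1 : i = a
    · have hib : i ≠ b := by rw [h1]; exact hab
      have hxia : x i = x a := by rw [h1]
      have hya : y i = x b := by rw [hy, h1, Equiv.Perm.mul_apply, Equiv.swap_apply_left]
      have hint : (i, x i) ∉ rectInterior x a b := by
        rw [h1]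
        simp [rectInterior, cycIoo]
      rw [if_neg hint, hya, hxia, if_pos h1, if_neg hib, h1]
      rw [if_pos (cycIco_self hab), if_neg (not_cycIco_pred_self (b := b)),
        if_pos (cycIco_self hxab), if_neg (not_cycIco_pred_self (b := x b)),
        if_neg (not_cycIco_right (a := x a)), if_pos (cycIco_pred_right hxab)]
      norm_num
    by_cases h2 : i = b
    · have hyb : y i = x a := by rw [hy, h2, Equiv.Perm.mul_apply, Equiv.swap_apply_right]
      have hxib : x i = x b := by rw [h2]
      have hint : (i, x i) ∉ rectInterior x a b := by
        rw [h2]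
        simp [rectInterior, cycIoo]
      rw [if_neg hint, hyb, hxib, if_neg h1, if_pos h2, h2]
      rw [if_neg (not_cycIco_right (a := a)), if_pos (cycIco_pred_right hab),
        if_pos (cycIco_self hxab), if_neg (not_cycIco_pred_self (b := x b)),
        if_neg (not_cycIco_right (a := x a)), if_pos (cycIco_pred_right hxab)]
      norm_num
    · have hyi : y i = x i := by
        rw [hy, Equiv.Perm.mul_apply, Equiv.swap_apply_of_ne_of_ne h1 h2]
      have hxa : x i ≠ x a := fun h => h1 (x.injective h)
      have hxb : x i ≠ x b := fun h => h2 (x.injective h)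
      have hmem : (i, x i) ∈ rectInterior x a b ↔
          (cycIco a b i ∧ cycIco (x a) (x b) (x i)) := by
        simp [rectInterior, cycIoo_iff, h1, hxa]
      rw [hyi, if_neg h1, if_neg h2]
      simp only [cycIco_pred_iff h1 h2, cycIco_pred_iff hxa hxb, hmem]
      split_ifs <;> first | tauto | norm_num
  have hcard : {i : ZMod n | (i, x i) ∈ rectInterior x a b}.ncard
      = (Finset.univ.filter fun i : ZMod n => (i, x i) ∈ rectInterior x a b).card := by
    rw [← Set.ncard_coe_finset]
    congr 1
    ext i
    simp
  have hsum : totalVertexMult x y (Set.indicator (rectSquares x a b) fun _ => (1:ℤ))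
      = 1 + 2 * (k : ℚ) := by
    rw [totalVertexMult, ← Finset.sum_add_distrib,
      Finset.sum_congr rfl (fun i _ => hpt i), Finset.sum_add_distrib,
      Finset.sum_add_distrib]
    rw [Finset.sum_ite_eq' Finset.univ a (fun _ => (2:ℚ)⁻¹),
      Finset.sum_ite_eq' Finset.univ b (fun _ => (2:ℚ)⁻¹)]
    rw [← Finset.sum_filter, Finset.sum_const, ← hcard, hk]
    simp only [Finset.mem_univ, if_pos, nsmul_eq_mul]
    push_cast
    ring
  refine ⟨hsum, ?_⟩
  rw [hsum]
  constructor
  · intro h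
    have hk0 : k = 0 := by
      have : (k : ℚ) = 0 := by linarith
      exact_mod_cast this
    refine ⟨⟨hab, hy⟩, fun i hmem => ?_⟩
    have hfin : {i : ZMod n | (i, x i) ∈ rectInterior x a b}.Finite := Set.toFinite _
    have hempty := (Set.ncard_eq_zero hfin).mp (by rw [hk, hk0])
    exact absurd (hempty ▸ hmem : i ∈ (∅ : Set (ZMod n))) (Set.notMem_empty i)
  · rintro ⟨_, hempty⟩
    have h0 : {i : ZMod n | (i, x i) ∈ rectInterior x a b} = ∅ :=
      Set.eq_empty_iff_forall_notMem.mpr hempty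
    have : k = 0 := by rw [← hk, h0, Set.ncard_empty]
    rw [this]
    norm_num



end GridDiagrams
end
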